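/- Let X be a Banach space such that X** = X ⊕ F as a topological direct sum with F finite-dimensional (X quasi-reflexive), witnessed by a continuous projection P : X** → X** with range J_X(X) and kernel F. If x ∈ X with ‖x‖ ≤ 1 is a point of weak-to-norm continuity of the identity on the closed unit ball of X, then J_X(x) is a point of weak-to-norm continuity of the identity on the closed unit ball of X**. -/

import Mathlib

open NormedSpace Filter Topology
open scoped ENNReal

noncomputable section

/-- The annihilator of a subspace `Y ⊆ X` inside the continuous dual of `X`. -/
def annih {X : Type*} [SeminormedAddCommGroup X] [NormedSpace ℝ X] (Y : Submodule ℝ X) :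
    Submodule ℝ (StrongDual ℝ X) where
  carrier := {f | ∀ y ∈ Y, f y = 0}
  add_mem' := by
    intro a b ha hb y hy
    simp [ContinuousLinearMap.add_apply, ha y hy, hb y hy]
  zero_mem' := by intro y hy; rfl
  smul_mem' := by
    intro c f hf y hy
    simp [hf y hy]

/-- A Banach space is reflexive iff the canonical embedding into its bidual is surjective. -/
def BReflexive (X : Type*) [SeminormedAddCommGroup X] [NormedSpace ℝ X] : Prop :=
  Function.Surjective (inclusionInDoubleDual ℝ X)

/-- A Banach space is coreflexive iff `X**/J_X(X)` is reflexive. -/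
def Coreflexive (X : Type*) [SeminormedAddCommGroup X] [NormedSpace ℝ X] : Prop :=
  @BReflexive (@HasQuotient.Quotient _ _ (@Submodule.hasQuotient ℝ _ (NormedField.toField (α := ℝ)).toDivisionRing.toRing _ _) (LinearMap.range (inclusionInDoubleDual ℝ X).toLinearMap)) (@Submodule.Quotient.seminormedAddCommGroup _ ContinuousLinearMap.toSeminormedAddCommGroup ℝ (NormedField.toField (α := ℝ)).toDivisionRing.toRing ContinuousLinearMap.module _) (@Submodule.Quotient.normedSpace _ ContinuousLinearMap.toSeminormedAddCommGroup ℝ (NormedField.toField (α := ℝ)).toDivisionRing.toRing ContinuousLinearMap.module _ ℝ _ ContinuousLinearMap.toNormedSpace _ _)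

/-- The adjoint of a continuous linear map between normed spaces. -/
def adj {E F : Type*} [SeminormedAddCommGroup E] [NormedSpace ℝ E]
    [SeminormedAddCommGroup F] [NormedSpace ℝ F] (f : E →L[ℝ] F) :
    StrongDual ℝ F →L[ℝ] StrongDual ℝ E :=
  (ContinuousLinearMap.compL ℝ E F ℝ).flip f

/-- `X` is weak*-sequentially dense in its bidual. -/
def WStarSeqDense (X : Type*) [SeminormedAddCommGroup X] [NormedSpace ℝ X] : Prop :=
  ∀ F : StrongDual ℝ (StrongDual ℝ X), ∃ x : ℕ → X, ∀ f : StrongDual ℝ X,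
    Tendsto (fun n => inclusionInDoubleDual ℝ X (x n) f) atTop (𝓝 (F f))

/-- `x` is a point of weak-to-norm continuity of the closed unit ball of `X`. -/
def wPC (X : Type*) [SeminormedAddCommGroup X] [NormedSpace ℝ X] (x : X) : Prop :=
  ∀ l : Filter X, (∀ᶠ y in l, ‖y‖ ≤ 1) →
    (∀ f : StrongDual ℝ X, Tendsto (fun y => f y) l (𝓝 (f x))) →
    Tendsto id l (𝓝 x)

/-! Let `G → J x` weakly with `‖G‖ ≤ 1`. The component `G - P G` lies in the finite-dimensional
space `ker P`, where weak and norm convergence agree, so it tends to `0` in norm. The other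
component is `P G = J y`, where `y → x` weakly because every functional on `X` extends along the
isometry `J` (Hahn–Banach), and `‖y‖ ≤ 1 + ‖G - P G‖`. Rescaling `y` into the unit ball moves it
by at most `‖G - P G‖`, so continuity at `x` gives `y → x` in norm, hence `G → J x`. -/

section

variable {α : Type*} {l : Filter α}

theorem FiniteDimensional.tendsto_of_forall_dual_tendsto {𝕜 F : Type*} [NontriviallyNormedField 𝕜]
    [CompleteSpace 𝕜] [NormedAddCommGroup F] [NormedSpace 𝕜 F] [FiniteDimensional 𝕜 F]
    {u : α → F} {a : F}
    (h : ∀ f : StrongDual 𝕜 F, Tendsto (fun i => f (u i)) l (𝓝 (f a))) :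
    Tendsto u l (𝓝 a) := by
  let e := (Module.finBasis 𝕜 F).equivFun.toContinuousLinearEquiv
  rw [e.toHomeomorph.isInducing.tendsto_nhds_iff, tendsto_pi_nhds]
  exact fun i => h (ContinuousLinearMap.proj (R := 𝕜) (φ := fun _ => 𝕜) i ∘L e)

theorem LinearIsometry.exists_dual_comp_eq {𝕜 X E : Type*} [RCLike 𝕜]
    [NormedAddCommGroup X] [NormedSpace 𝕜 X] [NormedAddCommGroup E] [NormedSpace 𝕜 E]
    (J : X →ₗᵢ[𝕜] E) (f : StrongDual 𝕜 X) : ∃ g : StrongDual 𝕜 E, ∀ v, g (J v) = f v := by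
  obtain ⟨g, hg, -⟩ := exists_extension_norm_eq (LinearMap.range J.toLinearMap)
    (f ∘L J.equivRange.symm.toContinuousLinearEquiv.toContinuousLinearMap)
  exact ⟨g, fun v => by simpa using hg (J.equivRange v)⟩

theorem norm_inv_max_one_smul_le_one {E : Type*} [NormedAddCommGroup E] [NormedSpace ℝ E]
    (y : E) : ‖(max 1 ‖y‖)⁻¹ • y‖ ≤ 1 := by
  have hpos : 0 < max 1 ‖y‖ := lt_max_of_lt_left one_pos
  rw [norm_smul, Real.norm_of_nonneg (inv_nonneg.2 hpos.le), inv_mul_le_one₀ hpos]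
  exact le_max_right _ _

theorem norm_inv_max_one_smul_sub {E : Type*} [NormedAddCommGroup E] [NormedSpace ℝ E] (y : E) :
    ‖(max 1 ‖y‖)⁻¹ • y - y‖ = max 1 ‖y‖ - 1 := by
  rcases le_total ‖y‖ 1 with h | h
  · simp [max_eq_left h]
  · have hy : 0 < ‖y‖ := one_pos.trans_le h
    rw [max_eq_right h, show ‖y‖⁻¹ • y - y = (‖y‖⁻¹ - 1) • y by rw [sub_smul, one_smul],
      norm_smul, Real.norm_of_nonpos]
    · field_simp; ring
    · simp [inv_le_one_of_one_le₀ h]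

theorem wPC.tendsto {X : Type*} [NormedAddCommGroup X] [NormedSpace ℝ X] {x : X} (hx : wPC X x)
    {u : α → X} (hnorm : ∀ᶠ i in l, ‖u i‖ ≤ 1)
    (hweak : ∀ f : StrongDual ℝ X, Tendsto (fun i => f (u i)) l (𝓝 (f x))) :
    Tendsto u l (𝓝 x) :=
  hx (l.map u) (eventually_map.2 hnorm) (fun f => tendsto_map'_iff.2 (hweak f))

theorem wPC.tendsto_of_norm_le_one_add {X : Type*} [NormedAddCommGroup X] [NormedSpace ℝ X]
    {x : X} (hx : wPC X x) {u : α → X} {ε : α → ℝ} (hε : Tendsto ε l (𝓝 0))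
    (hnorm : ∀ᶠ i in l, ‖u i‖ ≤ 1 + ε i)
    (hweak : ∀ f : StrongDual ℝ X, Tendsto (fun i => f (u i)) l (𝓝 (f x))) :
    Tendsto u l (𝓝 x) := by
  set z : α → X := fun i => (max 1 ‖u i‖)⁻¹ • u i
  have hzu : Tendsto (fun i => z i - u i) l (𝓝 0) := by
    rw [tendsto_zero_iff_norm_tendsto_zero]
    refine squeeze_zero' (.of_forall fun _ => norm_nonneg _) ?_ (by simpa using hε.abs)
    filter_upwards [hnorm] with i hi
    rw [norm_inv_max_one_smul_sub, sub_le_iff_le_add, max_le_iff]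
    constructor <;> linarith [abs_nonneg (ε i), le_abs_self (ε i)]
  have hz : Tendsto z l (𝓝 x) := by
    refine hx.tendsto (.of_forall fun i => norm_inv_max_one_smul_le_one (u i)) fun f => ?_
    simpa using (hweak f).add ((f.continuous.tendsto 0).comp hzu)
  simpa using hz.sub hzu

theorem LinearIsometry.wPC_apply_of_isProjection {X E : Type*} [NormedAddCommGroup X]
    [NormedSpace ℝ X] [NormedAddCommGroup E] [NormedSpace ℝ E] (J : X →ₗᵢ[ℝ] E) (P : E →L[ℝ] E)
    (hPP : P.comp P = P) (hrange : LinearMap.range P.toLinearMap = LinearMap.range J.toLinearMap)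
    [FiniteDimensional ℝ (LinearMap.ker P.toLinearMap)] {x : X} (hx : wPC X x) :
    wPC E (J x) := by
  intro l hball hweak
  have hPidem : ∀ G, P (P G) = P G := DFunLike.congr_fun hPP
  have hPG (G : E) : ∃ v, J v = P G :=
    (hrange ▸ LinearMap.mem_range_self P.toLinearMap G : P G ∈ LinearMap.range J.toLinearMap)
  choose y hy using hPG
  have hPJ : ∀ v, P (J v) = J v := fun v => by
    obtain ⟨G, hG⟩ := hrange ▸ LinearMap.mem_range_self J.toLinearMap v
    rw [← show P G = J v from hG, hPidem]
  let Q : E →L[ℝ] LinearMap.ker P.toLinearMap :=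
    (ContinuousLinearMap.id ℝ E - P).codRestrict _ fun G => by simp [hPidem]
  have hQ : Tendsto (fun G => G - P G) l (𝓝 0) := by
    have : Tendsto Q l (𝓝 (Q (J x))) :=
      FiniteDimensional.tendsto_of_forall_dual_tendsto fun f => hweak (f ∘L Q)
    simpa [Q, hPJ, Function.comp_def] using (continuous_subtype_val.tendsto _).comp this
  have hyx : Tendsto y l (𝓝 x) := by
    refine hx.tendsto_of_norm_le_one_add (tendsto_zero_iff_norm_tendsto_zero.1 hQ) ?_ fun f => ?_
    · filter_upwards [hball] with G hG
      calc ‖y G‖ = ‖G - (G - P G)‖ := by rw [← J.norm_map, hy, sub_sub_cancel]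
        _ ≤ 1 + ‖G - P G‖ := (norm_sub_le _ _).trans (by linarith)
    · obtain ⟨g, hg⟩ := J.exists_dual_comp_eq f
      simpa [← hg, hy, hPJ] using hweak (g ∘L P)
  have hsplit : ∀ G, J (y G) + (G - P G) = G := fun G => by rw [hy, add_sub_cancel]
  have hlim := (((J.continuous.tendsto x).comp hyx).add hQ).congr hsplit
  rwa [add_zero] at hlim

end

theorem stmt11_general (X : Type*) [NormedAddCommGroup X] [NormedSpace ℝ X]
    (P : StrongDual ℝ (StrongDual ℝ X) →L[ℝ] StrongDual ℝ (StrongDual ℝ X))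
    (hPP : P.comp P = P)
    (hrange : LinearMap.range P.toLinearMap = LinearMap.range (inclusionInDoubleDual ℝ X).toLinearMap)
    (hker : @FiniteDimensional ℝ ↥(LinearMap.ker P.toLinearMap) _ (@Submodule.addCommGroup ℝ _ (NormedField.toField (α := ℝ)).toDivisionRing.toRing ContinuousLinearMap.addCommGroup _ _) _)
    (x : X) (hxPC : wPC X x) :
    wPC (StrongDual ℝ (StrongDual ℝ X)) (inclusionInDoubleDual ℝ X x) := by
  have := hker
  exact LinearIsometry.wPC_apply_of_isProjection (E := StrongDual ℝ (StrongDual ℝ X))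
    (inclusionInDoubleDualLi ℝ) P hPP hrange hxPC

theorem stmt11 (X : Type*) [NormedAddCommGroup X] [NormedSpace ℝ X] [CompleteSpace X]
    (P : StrongDual ℝ (StrongDual ℝ X) →L[ℝ] StrongDual ℝ (StrongDual ℝ X))
    (hPP : P.comp P = P)
    (hrange : LinearMap.range P.toLinearMap = LinearMap.range (inclusionInDoubleDual ℝ X).toLinearMap)
    (hker : @FiniteDimensional ℝ ↥(LinearMap.ker P.toLinearMap) _ (@Submodule.addCommGroup ℝ _ (NormedField.toField (α := ℝ)).toDivisionRing.toRing ContinuousLinearMap.addCommGroup _ _) _)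
    (x : X) (hx : ‖x‖ ≤ 1) (hxPC : wPC X x) :
    wPC (StrongDual ℝ (StrongDual ℝ X)) (inclusionInDoubleDual ℝ X x) :=
  stmt11_general X P hPP hrange hker x hxPC
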